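/- Suppose T > 0 satisfies λ₀ − (T²/2)·c_Φ⁻ − T·c_Ψ⁻ > 0 and fix q ∈ ℝ^d. If r⁰ and r¹ are C¹ paths on [0,T] with r⁰(T) = r¹(T) = q, each of which minimizes B₀^T among all C¹ paths r : [0,T] → ℝ^d with r(T) = q, then r⁰(s) = r¹(s) for every s ∈ [0,T]. -/

import Mathlib

/-!
Average two minimizers `r₀, r₁` into the midpoint path, which is admissible, so the midpoint
defect `B(r₀) + B(r₁) - 2 B(½(r₀ + r₁))` of the cost is `≤ 0`. On the other hand, restricting each
term of the cost to a segment and using `f(0) + f(1) - 2 f(½) ≥ m / 4` whenever `f'' ≥ m`, the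
convexity hypotheses bound this defect from below by
`(λ₀ W + c_Φ ∫ ‖r₁ - r₀‖² + c_Ψ ‖r₁(0) - r₀(0)‖²) / 4`, where `W = ∫ ‖ṙ₁ - ṙ₀‖²`. Since the paths
agree at time `T`, Cauchy–Schwarz gives `‖r₁(t) - r₀(t)‖² ≤ (T - t) W`, so the lower bound is at
least `(λ₀ - T²/2 c_Φ⁻ - T c_Ψ⁻) W / 4`. The smallness of `T` forces `W = 0`, and then `r₀ = r₁`.
-/

open MeasureTheory Set
open scoped RealInnerProductSpace

/-- The individual cost `B₀^T(r)` of a path `r : [0,T] → ℝ^d`: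
`∫₀^T [ L(r(s), ṙ(s)) + ∫_Ω Φ(r(s) − Γ(s,ω̃)) dω̃ ] ds + ∫_Ω Ψ(r(0) − Γ(0,ω̃)) dω̃`. -/
noncomputable def indivCost (d : ℕ) (T : ℝ)
    (L : EuclideanSpace ℝ (Fin d) → EuclideanSpace ℝ (Fin d) → ℝ)
    (Φ Ψ : EuclideanSpace ℝ (Fin d) → ℝ)
    (Γ : ℝ → ℝ → EuclideanSpace ℝ (Fin d))
    (r : ℝ → EuclideanSpace ℝ (Fin d)) : ℝ :=
  (∫ s in Icc (0:ℝ) T,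
      (L (r s) (derivWithin r (Icc (0:ℝ) T) s)
        + ∫ ω in Ioo (0:ℝ) 1, Φ (r s - Γ s ω)))
    + ∫ ω in Ioo (0:ℝ) 1, Ψ (r 0 - Γ 0 ω)

open Function

noncomputable def midpointDefect {E : Type*} [AddCommGroup E] [Module ℝ E] (f : E → ℝ)
    (x y : E) : ℝ :=
  f x + f y - 2 * f (midpoint ℝ x y)

section MidpointDefect

variable {E : Type*}

theorem midpointDefect_add [AddCommGroup E] [Module ℝ E] (f g : E → ℝ) (x y : E) :
    midpointDefect (fun z => f z + g z) x y = midpointDefect f x y + midpointDefect g x y := by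
  simp only [midpointDefect]; ring

theorem midpointDefect_nonpos [AddCommGroup E] [Module ℝ E] {f : E → ℝ} {x y : E}
    (hx : f x ≤ f (midpoint ℝ x y)) (hy : f y ≤ f (midpoint ℝ x y)) :
    midpointDefect f x y ≤ 0 := by
  rw [midpointDefect]; linarith

theorem midpointDefect_comp_sub_const [AddCommGroup E] [Module ℝ E] (f : E → ℝ) (c x y : E) :
    midpointDefect (fun z => f (z - c)) x y = midpointDefect f (x - c) (y - c) := by
  have hmid : midpoint ℝ (x - c) (y - c) = midpoint ℝ x y - c := by
    simpa using (midpoint_vsub_midpoint (R := ℝ) x y c c).symm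
  simp only [midpointDefect, hmid]

theorem mul_sq_div_four_le_midpointDefect {f : ℝ → ℝ} (hf : ContDiff ℝ 2 f) {m : ℝ}
    (hm : ∀ x, m ≤ iteratedDeriv 2 f x) (a b : ℝ) :
    m * (b - a) ^ 2 / 4 ≤ midpointDefect f a b := by
  have hg : ContDiff ℝ 2 fun x => f x - m / 2 * x ^ 2 := hf.sub (by fun_prop)
  have hconv : ConvexOn ℝ univ fun x => f x - m / 2 * x ^ 2 := by
    refine convexOn_univ_of_deriv2_nonneg (hg.differentiable two_ne_zero)
      hg.differentiable_deriv_two fun x => ?_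
    rw [← iteratedDeriv_eq_iterate, iteratedDeriv_fun_sub hf.contDiffAt (by fun_prop),
      iteratedDeriv_const_mul_field, iteratedDeriv_pow]
    norm_num [hm x]
  have hmid := hconv.2 (mem_univ a) (mem_univ b) (by norm_num : (0:ℝ) ≤ 1 / 2)
    (by norm_num : (0:ℝ) ≤ 1 / 2) (by norm_num)
  rw [midpointDefect, midpoint_eq_smul_add, smul_eq_mul, invOf_eq_inv]
  simp only [smul_eq_mul] at hmid
  rw [show (1 / 2 : ℝ) * a + 1 / 2 * b = 2⁻¹ * (a + b) by ring] at hmid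
  nlinarith

variable [NormedAddCommGroup E] [NormedSpace ℝ E]

open AffineMap in
theorem iteratedDeriv_two_comp_lineMap {F : E → ℝ} (hF : ContDiff ℝ 2 F) (x y : E) (e : ℝ) :
    iteratedDeriv 2 (fun e : ℝ => F (lineMap x y e)) e
      = iteratedFDeriv ℝ 2 F (lineMap x y e) ![y - x, y - x] := by
  have h2 : iteratedDeriv 2 (lineMap x y : ℝ → E) e = 0 := by
    rw [iteratedDeriv_succ, iteratedDeriv_one,
      show deriv (lineMap x y : ℝ → E) = fun _ => y - x from
        funext fun _ => hasDerivAt_lineMap.deriv, deriv_const]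
  have := iteratedDeriv_vcomp_two (x := e) hF.contDiffAt (contDiff_lineMap x y).contDiffAt
  rw [comp_def, hasDerivAt_lineMap.deriv, h2, map_zero, add_zero] at this
  rw [this]
  congr 1
  ext i; fin_cases i <;> rfl

theorem mul_norm_sq_div_four_le_midpointDefect {F : E → ℝ} (hF : ContDiff ℝ 2 F) {c : ℝ}
    (hc : ∀ x h, c * ‖h‖ ^ 2 ≤ iteratedFDeriv ℝ 2 F x ![h, h]) (x y : E) :
    c * ‖y - x‖ ^ 2 / 4 ≤ midpointDefect F x y := by
  have := mul_sq_div_four_le_midpointDefect (hF.comp (AffineMap.contDiff_lineMap x y))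
    (fun e => (iteratedDeriv_two_comp_lineMap hF x y e).symm ▸ hc _ (y - x)) 0 1
  simpa [midpointDefect, midpoint] using this

theorem mul_norm_sq_div_four_le_midpointDefect_uncurry {L : E → E → ℝ}
    (hL : ContDiff ℝ 2 (uncurry L)) {lam : ℝ}
    (hlam : ∀ q₀ q₁ v₀ v₁ : E, ∀ ε : ℝ, lam * ‖v₁ - v₀‖ ^ 2 ≤
      iteratedDeriv 2 (fun e : ℝ => L ((1 - e) • q₀ + e • q₁) ((1 - e) • v₀ + e • v₁)) ε)
    (q₀ q₁ v₀ v₁ : E) :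
    lam * ‖v₁ - v₀‖ ^ 2 / 4 ≤ midpointDefect (uncurry L) (q₀, v₀) (q₁, v₁) := by
  have hseg : ContDiff ℝ 2 fun e : ℝ => ((1 - e) • q₀ + e • q₁, (1 - e) • v₀ + e • v₁) := by
    fun_prop
  have := mul_sq_div_four_le_midpointDefect (hL.comp hseg) (hlam q₀ q₁ v₀ v₁) 0 1
  norm_num [midpointDefect, midpoint_eq_smul_add] at this ⊢
  exact this

end MidpointDefect

section Integral

variable {α : Type*} [MeasurableSpace α] {μ : Measure α} {E : Type*}

theorem integral_le_midpointDefect_integral [AddCommGroup E] [Module ℝ E] {F : E → α → ℝ}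
    {a : α → ℝ} {x y : E} (ha : Integrable a μ) (hx : Integrable (F x) μ)
    (hy : Integrable (F y) μ) (hm : Integrable (F (midpoint ℝ x y)) μ)
    (h : ∀ᵐ ω ∂μ, a ω ≤ midpointDefect (F · ω) x y) :
    ∫ ω, a ω ∂μ ≤ midpointDefect (fun z => ∫ ω, F z ω ∂μ) x y := by
  have hsum : Integrable (fun ω => F x ω + F y ω) μ := hx.add hy
  calc ∫ ω, a ω ∂μ ≤ ∫ ω, F x ω + F y ω - 2 * F (midpoint ℝ x y) ω ∂μ :=
        integral_mono_ae ha (hsum.sub (hm.const_mul 2)) h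
    _ = _ := by
      rw [integral_sub hsum (hm.const_mul 2), integral_add hx hy, integral_const_mul]; rfl

theorem mul_norm_sq_div_four_le_midpointDefect_integral_comp_sub [IsProbabilityMeasure μ]
    [NormedAddCommGroup E] [NormedSpace ℝ E] {F : E → ℝ} (hF : ContDiff ℝ 2 F) {c : ℝ}
    (hc : ∀ x h, c * ‖h‖ ^ 2 ≤ iteratedFDeriv ℝ 2 F x ![h, h]) {γ : α → E}
    (hint : ∀ z, Integrable (fun ω => F (z - γ ω)) μ) (x y : E) :
    c * ‖y - x‖ ^ 2 / 4 ≤ midpointDefect (fun z => ∫ ω, F (z - γ ω) ∂μ) x y := by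
  have := integral_le_midpointDefect_integral (F := fun z ω => F (z - γ ω))
    (integrable_const (c * ‖y - x‖ ^ 2 / 4)) (hint x) (hint y) (hint _) <|
    ae_of_all _ fun ω => by
      rw [midpointDefect_comp_sub_const F]
      simpa using mul_norm_sq_div_four_le_midpointDefect hF hc (x - γ ω) (y - γ ω)
  simpa using this

variable [NormedAddCommGroup E] [ProperSpace E] {Φ : E → ℝ}

theorem Continuous.exists_bound_comp_sub (hΦ : Continuous Φ) (R C : ℝ) :
    ∃ M, ∀ x y : E, ‖x‖ ≤ R → ‖y‖ ≤ C → ‖Φ (x - y)‖ ≤ M := by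
  obtain ⟨M, hM⟩ := (isCompact_closedBall (0 : E) (R + C)).exists_bound_of_continuousOn
    hΦ.continuousOn
  refine ⟨M, fun x y hx hy => hM _ ?_⟩
  rw [mem_closedBall_zero_iff]
  exact (norm_sub_le x y).trans (add_le_add hx hy)

theorem Continuous.integrable_comp_sub [IsFiniteMeasure μ] (hΦ : Continuous Φ) {γ : α → E}
    (hγ : AEStronglyMeasurable γ μ) {C : ℝ} (hγb : ∀ ω, ‖γ ω‖ ≤ C) (x : E) :
    Integrable (fun ω => Φ (x - γ ω)) μ := by
  obtain ⟨M, hM⟩ := hΦ.exists_bound_comp_sub ‖x‖ C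
  exact .of_bound (hΦ.comp_aestronglyMeasurable (aestronglyMeasurable_const.sub hγ)) M
    (ae_of_all _ fun ω => hM _ _ le_rfl (hγb ω))

theorem Continuous.continuousOn_integral_comp_sub [IsFiniteMeasure μ] {X : Type*}
    [TopologicalSpace X] [FirstCountableTopology X] (hΦ : Continuous Φ) {Γ : X → α → E}
    (hΓm : ∀ t, AEStronglyMeasurable (Γ t) μ) {C : ℝ} (hΓb : ∀ t ω, ‖Γ t ω‖ ≤ C)
    (hΓc : ∀ ω, Continuous fun t => Γ t ω) {r : X → E} {K : Set X} (hK : IsCompact K)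
    (hr : ContinuousOn r K) :
    ContinuousOn (fun t => ∫ ω, Φ (r t - Γ t ω) ∂μ) K := by
  obtain ⟨R, hR⟩ := hK.exists_bound_of_continuousOn hr
  obtain ⟨M, hM⟩ := hΦ.exists_bound_comp_sub R C
  intro t ht
  refine continuousWithinAt_of_dominated (bound := fun _ => M)
    (.of_forall fun s => hΦ.comp_aestronglyMeasurable (aestronglyMeasurable_const.sub (hΓm s)))
    ?_ (integrable_const M) (ae_of_all _ fun ω => ?_)
  · filter_upwards [self_mem_nhdsWithin] with s hs
    exact ae_of_all _ fun ω => hM _ _ (hR s hs) (hΓb s ω)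
  · exact hΦ.continuousAt.comp_continuousWithinAt
      ((hr t ht).sub (hΓc ω).continuousAt.continuousWithinAt)

end Integral

theorem sq_integral_le_measureReal_mul_integral_sq {α : Type*} [MeasurableSpace α]
    {μ : Measure α} [IsFiniteMeasure μ] {g : α → ℝ} (hg : Integrable g μ)
    (hg2 : Integrable (fun x => g x ^ 2) μ) :
    (∫ x, g x ∂μ) ^ 2 ≤ μ.real univ * ∫ x, g x ^ 2 ∂μ := by
  rcases eq_zero_or_neZero μ with rfl | hμ
  · simp
  have hJensen := even_two.convexOn_pow.map_average_le (continuous_pow 2).continuousOn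
    isClosed_univ (ae_of_all _ fun _ => mem_univ _) hg hg2
  simp only [average_eq, smul_eq_mul] at hJensen
  have := mul_le_mul_of_nonneg_left hJensen (sq_nonneg (μ.real univ))
  have hc : 0 < μ.real univ := measureReal_univ_pos
  field_simp at this
  linarith

section Separation

variable {E : Type*} [NormedAddCommGroup E] [NormedSpace ℝ E] [CompleteSpace E] {a b t : ℝ}

theorem norm_sub_sq_le_mul_integral_norm_derivWithin_sq {f : ℝ → E}
    (hf : ContDiffOn ℝ 1 f (Icc a b)) (ht : t ∈ Icc a b) :
    ‖f b - f t‖ ^ 2 ≤ (b - t) * ∫ x in Icc a b, ‖derivWithin f (Icc a b) x‖ ^ 2 := by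
  rcases ht.2.eq_or_lt with rfl | htb
  · simp
  set f' := derivWithin f (Icc a b)
  have hsub : Icc t b ⊆ Icc a b := Icc_subset_Icc ht.1 le_rfl
  have hf' : ContinuousOn f' (Icc a b) :=
    hf.continuousOn_derivWithin (uniqueDiffOn_Icc (ht.1.trans_lt htb)) le_rfl
  have hftc : ∫ x in Icc t b, f' x = f b - f t := by
    rw [← intervalIntegral.integral_derivWithin_Icc_of_contDiffOn_Icc (hf.mono hsub) ht.2,
      intervalIntegral.integral_of_le ht.2, integral_Icc_eq_integral_Ioc,
      integral_Ioc_eq_integral_Ioo, integral_Ioc_eq_integral_Ioo]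
    refine setIntegral_congr_fun measurableSet_Ioo fun x hx => ?_
    simp only [f', derivWithin_of_mem_nhds (Icc_mem_nhds (ht.1.trans_lt hx.1) hx.2),
      derivWithin_of_mem_nhds (Icc_mem_nhds hx.1 hx.2)]
  have hint : IntegrableOn (fun x => ‖f' x‖) (Icc t b) :=
    (hf'.norm.mono hsub).integrableOn_compact isCompact_Icc
  have hint2 : IntegrableOn (fun x => ‖f' x‖ ^ 2) (Icc a b) :=
    (hf'.norm.pow 2).integrableOn_compact isCompact_Icc
  calc ‖f b - f t‖ ^ 2 = ‖∫ x in Icc t b, f' x‖ ^ 2 := by rw [hftc]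
    _ ≤ (∫ x in Icc t b, ‖f' x‖) ^ 2 := by gcongr; exact norm_integral_le_integral_norm _
    _ ≤ (b - t) * ∫ x in Icc t b, ‖f' x‖ ^ 2 := by
      simpa [Real.volume_real_Icc_of_le ht.2] using
        sq_integral_le_measureReal_mul_integral_sq hint (hint2.mono_set hsub)
    _ ≤ (b - t) * ∫ x in Icc a b, ‖f' x‖ ^ 2 := by
      gcongr
      exact ae_of_all _ fun _ => sq_nonneg _

theorem norm_sub_sq_le_mul_integral_norm_derivWithin_sub_sq {f g : ℝ → E}
    (hf : ContDiffOn ℝ 1 f (Icc a b)) (hg : ContDiffOn ℝ 1 g (Icc a b)) (hfg : f b = g b)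
    (ht : t ∈ Icc a b) :
    ‖f t - g t‖ ^ 2 ≤ (b - t) * ∫ x in Icc a b,
      ‖derivWithin f (Icc a b) x - derivWithin g (Icc a b) x‖ ^ 2 := by
  have := norm_sub_sq_le_mul_integral_norm_derivWithin_sq (hg.sub hf) ht
  rwa [hfg, sub_self, zero_sub, norm_neg, norm_sub_rev,
    setIntegral_congr_fun measurableSet_Icc fun x hx => by
      rw [derivWithin_fun_sub (hg.differentiableOn one_ne_zero x hx)
        (hf.differentiableOn one_ne_zero x hx), norm_sub_rev]] at this

end Separation

theorem HasDerivWithinAt.midpoint {E : Type*} [NormedAddCommGroup E] [NormedSpace ℝ E]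
    {f₀ f₁ : ℝ → E} {v₀ v₁ : E} {s : Set ℝ} {t : ℝ}
    (h₀ : HasDerivWithinAt f₀ v₀ s t) (h₁ : HasDerivWithinAt f₁ v₁ s t) :
    HasDerivWithinAt (fun t => midpoint ℝ (f₀ t) (f₁ t)) (midpoint ℝ v₀ v₁) s t := by
  simp only [midpoint_eq_smul_add]
  exact (h₀.add h₁).const_smul _

theorem ContDiffOn.midpoint {E : Type*} [NormedAddCommGroup E] [NormedSpace ℝ E]
    {f₀ f₁ : ℝ → E} {s : Set ℝ} {n : WithTop ℕ∞} (h₀ : ContDiffOn ℝ n f₀ s)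
    (h₁ : ContDiffOn ℝ n f₁ s) :
    ContDiffOn ℝ n (midpoint ℝ f₀ f₁) s :=
  h₀.lineMap h₁ (contDiffOn_const (c := (2⁻¹ : ℝ)))

instance : IsProbabilityMeasure (volume.restrict (Ioo (0 : ℝ) 1)) := ⟨by simp⟩

noncomputable def runningCost {E : Type*} [NormedAddCommGroup E] [NormedSpace ℝ E] (T : ℝ)
    (L : E → E → ℝ) (Φ : E → ℝ) (Γ : ℝ → ℝ → E) (r : ℝ → E) (t : ℝ) : ℝ :=
  L (r t) (derivWithin r (Icc 0 T) t) + ∫ ω in Ioo (0 : ℝ) 1, Φ (r t - Γ t ω)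

section RunningCost

variable {E : Type*} [NormedAddCommGroup E] [NormedSpace ℝ E] {T : ℝ} {L : E → E → ℝ}
  {Φ : E → ℝ} {Γ : ℝ → ℝ → E}

theorem continuousOn_runningCost [ProperSpace E] (hT : 0 < T) (hL : Continuous (uncurry L))
    (hΦ : Continuous Φ) (hΓm : ∀ t, AEStronglyMeasurable (Γ t) (volume.restrict (Ioo 0 1)))
    {C : ℝ} (hΓb : ∀ t ω, ‖Γ t ω‖ ≤ C) (hΓc : ∀ ω, Continuous fun t => Γ t ω) {r : ℝ → E}
    (hr : ContDiffOn ℝ 1 r (Icc 0 T)) :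
    ContinuousOn (runningCost T L Φ Γ r) (Icc 0 T) :=
  (hL.comp_continuousOn (hr.continuousOn.prodMk
      (hr.continuousOn_derivWithin (uniqueDiffOn_Icc hT) le_rfl))).add
    (hΦ.continuousOn_integral_comp_sub hΓm hΓb hΓc isCompact_Icc hr.continuousOn)

theorem le_midpointDefect_runningCost (hT : 0 < T) (hL : ContDiff ℝ 2 (uncurry L)) {lam : ℝ}
    (hlam : ∀ q₀ q₁ v₀ v₁ : E, ∀ ε : ℝ, lam * ‖v₁ - v₀‖ ^ 2 ≤
      iteratedDeriv 2 (fun e : ℝ => L ((1 - e) • q₀ + e • q₁) ((1 - e) • v₀ + e • v₁)) ε)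
    (hΦ : ContDiff ℝ 2 Φ) {c : ℝ} (hc : ∀ x h, c * ‖h‖ ^ 2 ≤ iteratedFDeriv ℝ 2 Φ x ![h, h])
    (hint : ∀ t x, Integrable (fun ω => Φ (x - Γ t ω)) (volume.restrict (Ioo 0 1)))
    {r₀ r₁ : ℝ → E} (hr₀ : DifferentiableOn ℝ r₀ (Icc 0 T))
    (hr₁ : DifferentiableOn ℝ r₁ (Icc 0 T)) {t : ℝ} (ht : t ∈ Icc 0 T) :
    (lam * ‖derivWithin r₁ (Icc 0 T) t - derivWithin r₀ (Icc 0 T) t‖ ^ 2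
      + c * ‖r₁ t - r₀ t‖ ^ 2) / 4 ≤ midpointDefect (runningCost T L Φ Γ · t) r₀ r₁ := by
  set v₀ := derivWithin r₀ (Icc 0 T) t
  set v₁ := derivWithin r₁ (Icc 0 T) t
  have hv : derivWithin (midpoint ℝ r₀ r₁) (Icc 0 T) t = midpoint ℝ v₀ v₁ :=
    ((hr₀ t ht).hasDerivWithinAt.midpoint (hr₁ t ht).hasDerivWithinAt).derivWithin
      (uniqueDiffOn_Icc hT t ht)
  have hLdef : midpointDefect (fun r => L (r t) (derivWithin r (Icc 0 T) t)) r₀ r₁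
      = midpointDefect (uncurry L) (r₀ t, v₀) (r₁ t, v₁) := by
    rw [midpointDefect, midpointDefect, hv]
    rfl
  have hL' := mul_norm_sq_div_four_le_midpointDefect_uncurry hL hlam (r₀ t) (r₁ t) v₀ v₁
  have hΦ' := mul_norm_sq_div_four_le_midpointDefect_integral_comp_sub hΦ hc (hint t) (r₀ t) (r₁ t)
  simp only [runningCost]
  rw [midpointDefect_add, hLdef]
  exact (add_div _ _ _).trans_le (add_le_add hL' hΦ')

end RunningCost

theorem le_midpointDefect_indivCost {d : ℕ} {T : ℝ} (hT : 0 < T)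
    {L : EuclideanSpace ℝ (Fin d) → EuclideanSpace ℝ (Fin d) → ℝ}
    {Φ Ψ : EuclideanSpace ℝ (Fin d) → ℝ} {Γ : ℝ → ℝ → EuclideanSpace ℝ (Fin d)}
    (hL : ContDiff ℝ 2 (uncurry L)) {lam : ℝ}
    (hlam : ∀ q₀ q₁ v₀ v₁ : EuclideanSpace ℝ (Fin d), ∀ ε : ℝ, lam * ‖v₁ - v₀‖ ^ 2 ≤
      iteratedDeriv 2 (fun e : ℝ => L ((1 - e) • q₀ + e • q₁) ((1 - e) • v₀ + e • v₁)) ε)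
    (hΦ : ContDiff ℝ 2 Φ) (hΨ : ContDiff ℝ 2 Ψ) {cΦ cΨ : ℝ}
    (hcΦ : ∀ x h, cΦ * ‖h‖ ^ 2 ≤ iteratedFDeriv ℝ 2 Φ x ![h, h])
    (hcΨ : ∀ x h, cΨ * ‖h‖ ^ 2 ≤ iteratedFDeriv ℝ 2 Ψ x ![h, h])
    (hΓm : ∀ t, AEStronglyMeasurable (Γ t) (volume.restrict (Ioo 0 1)))
    {C : ℝ} (hΓb : ∀ t ω, ‖Γ t ω‖ ≤ C) (hΓc : ∀ ω, Continuous fun t => Γ t ω)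
    {r₀ r₁ : ℝ → EuclideanSpace ℝ (Fin d)} (hr₀ : ContDiffOn ℝ 1 r₀ (Icc 0 T))
    (hr₁ : ContDiffOn ℝ 1 r₁ (Icc 0 T)) :
    (lam * ∫ t in Icc 0 T, ‖derivWithin r₁ (Icc 0 T) t - derivWithin r₀ (Icc 0 T) t‖ ^ 2)
        / 4 + (cΦ * ∫ t in Icc 0 T, ‖r₁ t - r₀ t‖ ^ 2) / 4 + cΨ * ‖r₁ 0 - r₀ 0‖ ^ 2 / 4
      ≤ midpointDefect (indivCost d T L Φ Ψ Γ) r₀ r₁ := by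
  have hcost : ∀ r, ContDiffOn ℝ 1 r (Icc 0 T) → IntegrableOn (runningCost T L Φ Γ r) (Icc 0 T) :=
    fun r hr => (continuousOn_runningCost hT hL.continuous hΦ.continuous hΓm hΓb hΓc
      hr).integrableOn_compact isCompact_Icc
  have hv₀ := hr₀.continuousOn_derivWithin (uniqueDiffOn_Icc hT) le_rfl
  have hv₁ := hr₁.continuousOn_derivWithin (uniqueDiffOn_Icc hT) le_rfl
  have hΔv : IntegrableOn
      (fun t => ‖derivWithin r₁ (Icc 0 T) t - derivWithin r₀ (Icc 0 T) t‖ ^ 2) (Icc 0 T) :=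
    ((hv₁.sub hv₀).norm.pow 2).integrableOn_compact isCompact_Icc
  have hΔr : IntegrableOn (fun t => ‖r₁ t - r₀ t‖ ^ 2) (Icc 0 T) :=
    ((hr₁.continuousOn.sub hr₀.continuousOn).norm.pow 2).integrableOn_compact isCompact_Icc
  have hrun := integral_le_midpointDefect_integral
    (a := fun t => (lam * ‖derivWithin r₁ (Icc 0 T) t - derivWithin r₀ (Icc 0 T) t‖ ^ 2
      + cΦ * ‖r₁ t - r₀ t‖ ^ 2) / 4) ((hΔv.const_mul lam).add (hΔr.const_mul cΦ)
    |>.div_const 4) (hcost r₀ hr₀) (hcost r₁ hr₁) (hcost _ (hr₀.midpoint hr₁))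
    ((ae_restrict_iff' measurableSet_Icc).2 <| ae_of_all _ fun t ht =>
      le_midpointDefect_runningCost hT hL hlam hΦ hcΦ
        (fun t => hΦ.continuous.integrable_comp_sub (hΓm t) (hΓb t))
        (hr₀.differentiableOn one_ne_zero) (hr₁.differentiableOn one_ne_zero) ht)
  have hinit := mul_norm_sq_div_four_le_midpointDefect_integral_comp_sub hΨ hcΨ
    (hΨ.continuous.integrable_comp_sub (hΓm 0) (hΓb 0)) (r₀ 0) (r₁ 0)
  rw [integral_div, integral_add (hΔv.const_mul lam) (hΔr.const_mul cΦ), integral_const_mul,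
    integral_const_mul, add_div] at hrun
  exact (add_le_add hrun hinit).trans_eq (midpointDefect_add
    (fun r => ∫ t in Icc 0 T, runningCost T L Φ Γ r t)
    (fun r => ∫ ω in Ioo (0 : ℝ) 1, Ψ (r 0 - Γ 0 ω)) r₀ r₁).symm

theorem setIntegral_Icc_le_of_le_sub_mul {h : ℝ → ℝ} {T W : ℝ} (hT : 0 ≤ T)
    (hh : IntegrableOn h (Icc 0 T)) (hle : ∀ t ∈ Icc 0 T, h t ≤ (T - t) * W) :
    ∫ t in Icc 0 T, h t ≤ T ^ 2 / 2 * W :=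
  calc ∫ t in Icc 0 T, h t ≤ ∫ t in Icc 0 T, (T - t) * W :=
        setIntegral_mono_on hh (by fun_prop : Continuous fun t => (T - t) * W).integrableOn_Icc
          measurableSet_Icc hle
    _ = T ^ 2 / 2 * W := by
      rw [integral_mul_const, integral_Icc_eq_integral_Ioc, ← intervalIntegral.integral_of_le hT,
        intervalIntegral.integral_sub intervalIntegrable_const
          intervalIntegral.intervalIntegrable_id,
        intervalIntegral.integral_const, integral_id, smul_eq_mul]
      ring

theorem neg_max_neg_zero_mul_le_mul {c x y : ℝ} (hx : 0 ≤ x) (hxy : x ≤ y) :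
    -(max (-c) 0 * y) ≤ c * x := by
  rcases le_total 0 c with hc | hc
  · rw [max_eq_right (by linarith)]
    nlinarith
  · rw [max_eq_left (by linarith)]
    nlinarith

theorem individual_cost_minimizer_unique_general
    (d : ℕ)
    (L : EuclideanSpace ℝ (Fin d) → EuclideanSpace ℝ (Fin d) → ℝ)
    (Φ Ψ : EuclideanSpace ℝ (Fin d) → ℝ)
    (Γ : ℝ → ℝ → EuclideanSpace ℝ (Fin d))
    (T : ℝ) (hT : 0 < T)
    -- `L` is `C³` and nonnegative
    (hL : ContDiff ℝ 3 (fun p : EuclideanSpace ℝ (Fin d) × EuclideanSpace ℝ (Fin d) => L p.1 p.2))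
    -- interpolated strong convexity constant `λ₀`
    (lam₀ : ℝ)
    (hlamL : ∀ q₀ q₁ v₀ v₁ : EuclideanSpace ℝ (Fin d), ∀ ε : ℝ,
      lam₀ * ‖v₁ - v₀‖ ^ 2 ≤
        iteratedDeriv 2
          (fun e : ℝ => L ((1 - e) • q₀ + e • q₁) ((1 - e) • v₀ + e • v₁)) ε)
    -- `Φ`, `Ψ` are `C³`, even, bounded below, with bounded derivatives of order 1,2,3
    (hΦ : ContDiff ℝ 3 Φ) (hΨ : ContDiff ℝ 3 Ψ)
    -- `c_Φ I ≤ ∇²Φ` and `c_Ψ I ≤ ∇²Ψ`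
    (cΦ cΨ : ℝ)
    (hcΦ : ∀ x h, cΦ * ‖h‖ ^ 2 ≤ iteratedFDeriv ℝ 2 Φ x ![h, h])
    (hcΨ : ∀ x h, cΨ * ‖h‖ ^ 2 ≤ iteratedFDeriv ℝ 2 Ψ x ![h, h])
    -- `Γ` is jointly measurable, bounded, continuous in time
    (hΓm : Measurable (fun p : ℝ × ℝ => Γ p.1 p.2))
    (hΓb : ∃ C, ∀ t ω, ‖Γ t ω‖ ≤ C)
    (hΓc : ∀ ω, Continuous (fun t => Γ t ω))
    -- smallness of `T`: `λ₀ − (T²/2)·c_Φ⁻ − T·c_Ψ⁻ > 0`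
    (hsmall : 0 < lam₀ - T ^ 2 / 2 * max (-cΦ) 0 - T * max (-cΨ) 0)
    (q : EuclideanSpace ℝ (Fin d))
    (r₀ r₁ : ℝ → EuclideanSpace ℝ (Fin d))
    (hr₀ : ContDiffOn ℝ 1 r₀ (Icc 0 T)) (hr₀T : r₀ T = q)
    (hr₁ : ContDiffOn ℝ 1 r₁ (Icc 0 T)) (hr₁T : r₁ T = q)
    (hmin₀ : ∀ r : ℝ → EuclideanSpace ℝ (Fin d),
      ContDiffOn ℝ 1 r (Icc 0 T) → r T = q →
        indivCost d T L Φ Ψ Γ r₀ ≤ indivCost d T L Φ Ψ Γ r)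
    (hmin₁ : ∀ r : ℝ → EuclideanSpace ℝ (Fin d),
      ContDiffOn ℝ 1 r (Icc 0 T) → r T = q →
        indivCost d T L Φ Ψ Γ r₁ ≤ indivCost d T L Φ Ψ Γ r) :
    ∀ s ∈ Icc (0:ℝ) T, r₀ s = r₁ s := by
  obtain ⟨C, hΓb⟩ := hΓb
  set W := ∫ t in Icc 0 T, ‖derivWithin r₁ (Icc 0 T) t - derivWithin r₀ (Icc 0 T) t‖ ^ 2
  have hsep : ∀ t ∈ Icc 0 T, ‖r₁ t - r₀ t‖ ^ 2 ≤ (T - t) * W := fun t ht =>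
    norm_sub_sq_le_mul_integral_norm_derivWithin_sub_sq hr₁ hr₀ (hr₁T.trans hr₀T.symm) ht
  have hdefect := le_midpointDefect_indivCost (Γ := Γ) hT (hL.of_le (by norm_num)) hlamL
    (hΦ.of_le (by norm_num)) (hΨ.of_le (by norm_num)) hcΦ hcΨ
    (fun t => (hΓm.comp measurable_prodMk_left).aestronglyMeasurable) hΓb hΓc hr₀ hr₁
  have hmidT : midpoint ℝ r₀ r₁ T = q := by simp [hr₀T, hr₁T]
  have hmin := midpointDefect_nonpos (hmin₀ _ (hr₀.midpoint hr₁) hmidT)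
    (hmin₁ _ (hr₀.midpoint hr₁) hmidT)
  have hΔr := setIntegral_Icc_le_of_le_sub_mul hT.le
    (((hr₁.continuousOn.sub hr₀.continuousOn).norm.pow 2).integrableOn_compact isCompact_Icc)
    hsep
  have hΦpart := neg_max_neg_zero_mul_le_mul (c := cΦ)
    (integral_nonneg fun t => sq_nonneg ‖r₁ t - r₀ t‖) hΔr
  have hΨpart := neg_max_neg_zero_mul_le_mul (c := cΨ) (sq_nonneg ‖r₁ 0 - r₀ 0‖)
    (by simpa using hsep 0 ⟨le_rfl, hT.le⟩)
  have hW : W ≤ 0 := by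
    refine nonpos_of_mul_nonpos_right ?_ hsmall
    linarith
  intro s hs
  have hs0 : ‖r₁ s - r₀ s‖ ^ 2 ≤ 0 :=
    (hsep s hs).trans (mul_nonpos_of_nonneg_of_nonpos (by linarith [hs.2]) hW)
  rw [← sub_eq_zero, ← norm_eq_zero, norm_sub_rev]
  exact pow_eq_zero_iff two_ne_zero |>.1 (le_antisymm hs0 (sq_nonneg _))

/-- If `T > 0` satisfies `λ₀ − (T²/2)·c_Φ⁻ − T·c_Ψ⁻ > 0`, then any two `C¹` minimizers
of the individual cost with the same terminal point `q` coincide on `[0,T]`. -/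
theorem individual_cost_minimizer_unique
    (d : ℕ) (hd : 1 ≤ d)
    (L : EuclideanSpace ℝ (Fin d) → EuclideanSpace ℝ (Fin d) → ℝ)
    (Φ Ψ : EuclideanSpace ℝ (Fin d) → ℝ)
    (Γ : ℝ → ℝ → EuclideanSpace ℝ (Fin d))
    (T : ℝ) (hT : 0 < T)
    -- `L` is `C³` and nonnegative
    (hL : ContDiff ℝ 3 (fun p : EuclideanSpace ℝ (Fin d) × EuclideanSpace ℝ (Fin d) => L p.1 p.2))
    (hL0 : ∀ q v, 0 ≤ L q v)
    -- coercivity: `c₀|v|² ≤ L(q,v)`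
    (c₀ : ℝ) (hc₀ : 0 < c₀) (hLc₀ : ∀ q v, c₀ * ‖v‖ ^ 2 ≤ L q v)
    -- `|∇_q L(q,v)| ≤ c₁`
    (c₁ : ℝ) (hc₁ : 0 < c₁)
    (hLc₁ : ∀ q v, ‖gradient (fun q' => L q' v) q‖ ≤ c₁)
    -- interpolated strong convexity constant `λ₀`
    (lam₀ : ℝ) (hlam₀ : 0 < lam₀)
    (hlamL : ∀ q₀ q₁ v₀ v₁ : EuclideanSpace ℝ (Fin d), ∀ ε : ℝ,
      lam₀ * ‖v₁ - v₀‖ ^ 2 ≤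
        iteratedDeriv 2
          (fun e : ℝ => L ((1 - e) • q₀ + e • q₁) ((1 - e) • v₀ + e • v₁)) ε)
    -- `Φ`, `Ψ` are `C³`, even, bounded below, with bounded derivatives of order 1,2,3
    (hΦ : ContDiff ℝ 3 Φ) (hΨ : ContDiff ℝ 3 Ψ)
    (hΦe : ∀ x, Φ (-x) = Φ x) (hΨe : ∀ x, Ψ (-x) = Ψ x)
    (hΦb : BddBelow (range Φ)) (hΨb : BddBelow (range Ψ))
    (hΦd : ∀ i, 1 ≤ i → i ≤ 3 → ∃ C, ∀ x, ‖iteratedFDeriv ℝ i Φ x‖ ≤ C)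
    (hΨd : ∀ i, 1 ≤ i → i ≤ 3 → ∃ C, ∀ x, ‖iteratedFDeriv ℝ i Ψ x‖ ≤ C)
    -- `c_Φ I ≤ ∇²Φ` and `c_Ψ I ≤ ∇²Ψ`
    (cΦ cΨ : ℝ)
    (hcΦ : ∀ x h, cΦ * ‖h‖ ^ 2 ≤ iteratedFDeriv ℝ 2 Φ x ![h, h])
    (hcΨ : ∀ x h, cΨ * ‖h‖ ^ 2 ≤ iteratedFDeriv ℝ 2 Ψ x ![h, h])
    -- `Γ` is jointly measurable, bounded, continuous in time
    (hΓm : Measurable (fun p : ℝ × ℝ => Γ p.1 p.2))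
    (hΓb : ∃ C, ∀ t ω, ‖Γ t ω‖ ≤ C)
    (hΓc : ∀ ω, Continuous (fun t => Γ t ω))
    -- smallness of `T`: `λ₀ − (T²/2)·c_Φ⁻ − T·c_Ψ⁻ > 0`
    (hsmall : 0 < lam₀ - T ^ 2 / 2 * max (-cΦ) 0 - T * max (-cΨ) 0)
    (q : EuclideanSpace ℝ (Fin d))
    (r₀ r₁ : ℝ → EuclideanSpace ℝ (Fin d))
    (hr₀ : ContDiffOn ℝ 1 r₀ (Icc 0 T)) (hr₀T : r₀ T = q)
    (hr₁ : ContDiffOn ℝ 1 r₁ (Icc 0 T)) (hr₁T : r₁ T = q)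
    (hmin₀ : ∀ r : ℝ → EuclideanSpace ℝ (Fin d),
      ContDiffOn ℝ 1 r (Icc 0 T) → r T = q →
        indivCost d T L Φ Ψ Γ r₀ ≤ indivCost d T L Φ Ψ Γ r)
    (hmin₁ : ∀ r : ℝ → EuclideanSpace ℝ (Fin d),
      ContDiffOn ℝ 1 r (Icc 0 T) → r T = q →
        indivCost d T L Φ Ψ Γ r₁ ≤ indivCost d T L Φ Ψ Γ r) :
    ∀ s ∈ Icc (0:ℝ) T, r₀ s = r₁ s :=
  individual_cost_minimizer_unique_general d L Φ Ψ Γ T hT hL lam₀ hlamL hΦ hΨ cΦ cΨ hcΦ hcΨ hΓm hΓb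
    hΓc hsmall q r₀ r₁ hr₀ hr₀T hr₁ hr₁T hmin₀ hmin₁
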